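/- arXiv:1912.10743 — 4 statements merged into one kernel-verified Lean document; each statement's English description precedes it below -/
import Mathlib

section
/- For every self-adjoint n×n matrix M over ℍ_ℂ, the Moore–Dyson quaternion determinant Qdet M is a scalar: Qdet M = conj(Qdet M), i.e., Qdet M lies in the subfield ℂ of ℍ_ℂ. -/
open Quaternion Matrix

/-- The complexified quaternions `ℍ_ℂ`. -/
abbrev HC : Type := QuaternionAlgebra ℂ (-1) 0 (-1)

/-- The factor of the Moore-Dyson quaternion determinant corresponding to the cycle of `σ`
through `x`, the cycle being written starting at `x`:
`M_{x, σx} M_{σx, σ²x} ⋯ M_{σ^{s-1}x, x}` where `s` is the length of the cycle. -/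
noncomputable def cycFac {n : ℕ} (M : Matrix (Fin n) (Fin n) HC) (σ : Equiv.Perm (Fin n))
    (x : Fin n) : HC :=
  ((List.range (orderOf (σ.cycleOf x))).map (fun t => M ((σ ^ t) x) ((σ ^ (t + 1)) x))).prod

open scoped Classical in
/-- The term `M_σ` of the Moore-Dyson quaternion determinant: the product over the cycles of `σ`,
each cycle starting at its largest element, the cycles being ordered by decreasing largest
element (cycles of length one are included). -/
noncomputable def permFac {n : ℕ} (M : Matrix (Fin n) (Fin n) HC) (σ : Equiv.Perm (Fin n)) : HC :=
  (((Finset.univ.filter (fun x : Fin n => ∀ y : Fin n, σ.SameCycle x y → y ≤ x)).sort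
      (· ≤ ·)).reverse.map (cycFac M σ)).prod

/-- The Moore-Dyson quaternion determinant `Qdet M = Σ_{σ ∈ S_n} sgn(σ) M_σ`. -/
noncomputable def Qdet {n : ℕ} (M : Matrix (Fin n) (Fin n) HC) : HC :=
  ∑ σ : Equiv.Perm (Fin n), ((Equiv.Perm.sign σ : ℤ) : HC) * permFac M σ

/-- A square quaternion matrix is self-adjoint if `M i j = conj (M j i)` for all `i, j`. -/
def IsSelfAdjointQ {n : ℕ} (M : Matrix (Fin n) (Fin n) HC) : Prop :=
  ∀ i j, M i j = star (M j i)

/-! Reversing the cycle of `σ` through `x` preserves the sign of `σ`, the set of cycle maxima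
(hence the order of the factors of `M_σ`) and all other cycle factors, while for self-adjoint `M`
it replaces the factor `a` of that cycle by `star a`. As `a + star a = 2 re a`, pairing `σ` with
this reversal shows that replacing the factor of every cycle with maximum `x` by its scalar part
leaves `Qdet M` unchanged. Doing this for all `x` in turn leaves only scalar terms. -/

theorem star_list_prod_map_range {R : Type*} [Monoid R] [StarMul R] (s : ℕ) (f : ℕ → R) :
    star ((List.range s).map f).prod = ((List.range s).map fun t ↦ star (f (s - 1 - t))).prod := by
  have h := unop_map_list_prod (starMulEquiv (R := R)) ((List.range s).map f)
  simp only [starMulEquiv_apply, MulOpposite.unop_op] at h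
  rw [h, List.map_map, ← List.map_reverse, List.range_eq_range', List.reverse_range', List.map_map,
    ← List.range_eq_range']
  simp [Function.comp_def]

theorem List.exists_prod_map_eq_mul_mul {α R : Type*} [Monoid R] {L : List α} (hL : L.Nodup) {x : α}
    (hx : x ∈ L) (f₀ : α → R) :
    ∃ P Q : R, ∀ f : α → R, (∀ y ∈ L, y ≠ x → f y = f₀ y) → (L.map f).prod = P * f x * Q := by
  obtain ⟨L₁, L₂, rfl⟩ := List.append_of_mem hx
  have hx₁ : x ∉ L₁ := fun h ↦ List.disjoint_of_nodup_append hL h List.mem_cons_self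
  have hx₂ : x ∉ L₂ := (List.nodup_cons.mp hL.of_append_right).1
  refine ⟨(L₁.map f₀).prod, (L₂.map f₀).prod, fun f hf ↦ ?_⟩
  have h₁ : L₁.map f = L₁.map f₀ :=
    List.map_congr_left fun y hy ↦ hf y (by simp [hy]) (by rintro rfl; exact hx₁ hy)
  have h₂ : L₂.map f = L₂.map f₀ :=
    List.map_congr_left fun y hy ↦ hf y (by simp [hy]) (by rintro rfl; exact hx₂ hy)
  rw [List.map_append, List.prod_append, List.map_cons, List.prod_cons, h₁, h₂, mul_assoc]

theorem Function.Involutive.sum_eq_sum_of_add_eq {ι M : Type*} [Fintype ι] [AddCommMonoid M]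
    [IsAddTorsionFree M] {g : ι → ι} (hg : Function.Involutive g) {f h : ι → M}
    (hfh : ∀ i, f i + f (g i) = h i + h (g i)) : ∑ i, f i = ∑ i, h i := by
  have double (u : ι → M) : 2 • ∑ i, u i = ∑ i, (u i + u (g i)) := by
    rw [Finset.sum_add_distrib, two_nsmul, ← Equiv.sum_comp (hg.toPerm g) u]
    rfl
  exact nsmul_right_injective two_ne_zero <| by simp only [double, hfh]

theorem QuaternionAlgebra.self_add_star_eq_re_add_re {R : Type*} [CommRing R] {c₁ c₃ : R}
    (a : QuaternionAlgebra R c₁ 0 c₃) :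
    a + star a = (a.re : QuaternionAlgebra R c₁ 0 c₃) + a.re := by
  rw [QuaternionAlgebra.self_add_star', zero_mul, add_zero, two_mul, QuaternionAlgebra.coe_add]

namespace Equiv.Perm

variable {α : Type*} [Fintype α] [DecidableEq α]

theorem commute_cycleOf (σ : Perm α) (x : α) : Commute σ (σ.cycleOf x) := by
  ext y
  by_cases h : σ.SameCycle x y
  · simp only [mul_apply, h.cycleOf_apply, (h.trans (sameCycle_apply_right.mpr .rfl)).cycleOf_apply]
  · simp only [mul_apply, cycleOf_apply_of_not_sameCycle h,
      cycleOf_apply_of_not_sameCycle (sameCycle_apply_right.not.mpr h)]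

theorem pow_orderOf_cycleOf_apply_self (σ : Perm α) (x : α) :
    (σ ^ orderOf (σ.cycleOf x)) x = x := by
  rw [← cycleOf_pow_apply_self, pow_orderOf_eq_one, one_apply]

/-- `σ` with its cycle `c` through `x` replaced by `c⁻¹`. -/
def reverseCycle (σ : Perm α) (x : α) : Perm α := σ * (σ.cycleOf x ^ 2)⁻¹

theorem zpow_reverseCycle (σ : Perm α) (x : α) (i : ℤ) :
    σ.reverseCycle x ^ i = σ ^ i * σ.cycleOf x ^ (-(2 * i)) := by
  rw [reverseCycle, (((commute_cycleOf σ x).pow_right 2).inv_right).mul_zpow, _root_.inv_zpow',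
    ← zpow_natCast, ← _root_.zpow_mul]
  norm_num

theorem zpow_reverseCycle_apply_of_sameCycle {σ : Perm α} {x y : α} (h : σ.SameCycle x y)
    (i : ℤ) : (σ.reverseCycle x ^ i) y = (σ ^ (-i)) y := by
  rw [zpow_reverseCycle, mul_apply, h.cycleOf_eq, cycleOf_zpow_apply_self, ← mul_apply,
    ← _root_.zpow_add]
  ring_nf

theorem zpow_reverseCycle_apply_of_not_sameCycle {σ : Perm α} {x y : α}
    (h : ¬σ.SameCycle x y) (i : ℤ) : (σ.reverseCycle x ^ i) y = (σ ^ i) y := by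
  rw [zpow_reverseCycle, mul_apply,
    zpow_apply_eq_self_of_apply_eq_self (cycleOf_apply_of_not_sameCycle h)]

theorem sameCycle_reverseCycle_iff (σ : Perm α) (x y z : α) :
    (σ.reverseCycle x).SameCycle y z ↔ σ.SameCycle y z := by
  by_cases h : σ.SameCycle x y
  · refine ⟨fun ⟨i, hi⟩ ↦ ⟨-i, ?_⟩, fun ⟨i, hi⟩ ↦ ⟨-i, ?_⟩⟩
    · rwa [← zpow_reverseCycle_apply_of_sameCycle h]
    · rwa [zpow_reverseCycle_apply_of_sameCycle h, neg_neg]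
  · refine ⟨fun ⟨i, hi⟩ ↦ ⟨i, ?_⟩, fun ⟨i, hi⟩ ↦ ⟨i, ?_⟩⟩
    · rwa [← zpow_reverseCycle_apply_of_not_sameCycle h]
    · rwa [zpow_reverseCycle_apply_of_not_sameCycle h]

theorem cycleOf_reverseCycle_self (σ : Perm α) (x : α) :
    (σ.reverseCycle x).cycleOf x = (σ.cycleOf x)⁻¹ := by
  ext y
  simp only [cycleOf_inv, cycleOf_apply, sameCycle_reverseCycle_iff, sameCycle_inv]
  split_ifs with h
  · simpa using zpow_reverseCycle_apply_of_sameCycle h 1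
  · rfl

theorem cycleOf_reverseCycle_of_not_sameCycle {σ : Perm α} {x y : α} (h : ¬σ.SameCycle x y) :
    (σ.reverseCycle x).cycleOf y = σ.cycleOf y := by
  ext z
  simp only [cycleOf_apply, sameCycle_reverseCycle_iff]
  split_ifs with hz
  · simpa using zpow_reverseCycle_apply_of_not_sameCycle (fun h' ↦ h (h'.trans hz.symm)) 1
  · rfl

theorem reverseCycle_involutive (x : α) :
    Function.Involutive fun σ : Perm α ↦ σ.reverseCycle x := by
  intro σ
  dsimp only
  rw [reverseCycle, cycleOf_reverseCycle_self, reverseCycle]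
  group

theorem sign_reverseCycle (σ : Perm α) (x : α) : sign (σ.reverseCycle x) = sign σ := by
  rw [reverseCycle, map_mul, map_inv, map_pow, Int.units_sq, inv_one, mul_one]

end Equiv.Perm

instance : IsAddTorsionFree HC := .of_isTorsionFree ℂ HC

section

open Equiv Perm

variable {n : ℕ}

theorem cycFac_reverseCycle_self {M : Matrix (Fin n) (Fin n) HC} (hM : IsSelfAdjointQ M)
    (σ : Perm (Fin n)) (x : Fin n) :
    cycFac M (σ.reverseCycle x) x = star (cycFac M σ x) := by
  rw [cycFac, cycFac, star_list_prod_map_range, cycleOf_reverseCycle_self, orderOf_inv]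
  set s := orderOf (σ.cycleOf x)
  have orbit : ∀ t ≤ s, (σ.reverseCycle x ^ t) x = (σ ^ (s - t)) x := by
    intro t ht
    rw [← zpow_natCast, zpow_reverseCycle_apply_of_sameCycle .rfl, ← zpow_natCast,
      Nat.cast_sub ht, sub_eq_neg_add, _root_.zpow_add, mul_apply, zpow_natCast,
      pow_orderOf_cycleOf_apply_self]
  refine congrArg List.prod (List.map_congr_left fun t ht ↦ ?_)
  have ht : t < s := List.mem_range.mp ht
  rw [orbit t ht.le, orbit (t + 1) ht, hM, show s - 1 - t + 1 = s - t by omega,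
    show s - (t + 1) = s - 1 - t by omega]

theorem cycFac_reverseCycle_of_not_sameCycle (M : Matrix (Fin n) (Fin n) HC)
    {σ : Perm (Fin n)} {x y : Fin n} (h : ¬σ.SameCycle x y) :
    cycFac M (σ.reverseCycle x) y = cycFac M σ y := by
  have orbit (t : ℕ) : (σ.reverseCycle x ^ t) y = (σ ^ t) y := by
    simpa using zpow_reverseCycle_apply_of_not_sameCycle h t
  simp only [cycFac, cycleOf_reverseCycle_of_not_sameCycle h, orbit]

open scoped Classical in
def cycleMaxima (σ : Perm (Fin n)) : Finset (Fin n) :=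
  Finset.univ.filter fun x ↦ ∀ y, σ.SameCycle x y → y ≤ x

def cycleProd {R : Type*} [Monoid R] (σ : Perm (Fin n)) (f : Fin n → R) : R :=
  (((cycleMaxima σ).sort (· ≤ ·)).reverse.map f).prod

theorem permFac_eq_cycleProd (M : Matrix (Fin n) (Fin n) HC) (σ : Perm (Fin n)) :
    permFac M σ = cycleProd σ (cycFac M σ) :=
  rfl

theorem mem_cycleMaxima {σ : Perm (Fin n)} {x : Fin n} :
    x ∈ cycleMaxima σ ↔ ∀ y, σ.SameCycle x y → y ≤ x := by
  simp [cycleMaxima]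

theorem cycleMaxima_reverseCycle (σ : Perm (Fin n)) (x : Fin n) :
    cycleMaxima (σ.reverseCycle x) = cycleMaxima σ := by
  ext
  simp only [mem_cycleMaxima, sameCycle_reverseCycle_iff]

theorem not_sameCycle_of_mem_cycleMaxima {σ : Perm (Fin n)} {x y : Fin n}
    (hx : x ∈ cycleMaxima σ) (hy : y ∈ cycleMaxima σ) (hne : y ≠ x) : ¬σ.SameCycle x y :=
  fun h ↦ hne (le_antisymm (mem_cycleMaxima.mp hx y h) (mem_cycleMaxima.mp hy x h.symm))

section cycleProd

variable {R : Type*} [Monoid R]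

theorem cycleProd_reverseCycle (σ : Perm (Fin n)) (x : Fin n) (f : Fin n → R) :
    cycleProd (σ.reverseCycle x) f = cycleProd σ f := by
  rw [cycleProd, cycleProd, cycleMaxima_reverseCycle]

theorem cycleProd_congr {σ : Perm (Fin n)} {f g : Fin n → R}
    (h : ∀ y ∈ cycleMaxima σ, f y = g y) : cycleProd σ f = cycleProd σ g :=
  congrArg List.prod <| List.map_congr_left fun y hy ↦ h y <| by simpa using hy

theorem exists_cycleProd_eq_mul_mul {σ : Perm (Fin n)} {x : Fin n} (hx : x ∈ cycleMaxima σ)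
    (f₀ : Fin n → R) :
    ∃ P Q : R, ∀ f : Fin n → R, (∀ y ∈ cycleMaxima σ, y ≠ x → f y = f₀ y) →
      cycleProd σ f = P * f x * Q := by
  obtain ⟨P, Q, hPQ⟩ := List.exists_prod_map_eq_mul_mul
    (L := ((cycleMaxima σ).sort (· ≤ ·)).reverse) (List.nodup_reverse.mpr (Finset.sort_nodup _ _))
    (by simpa using hx) f₀
  exact ⟨P, Q, fun f hf ↦ hPQ f fun y hy ↦ hf y (by simpa using hy)⟩

end cycleProd

noncomputable def cycFacRe (M : Matrix (Fin n) (Fin n) HC) (s : Finset (Fin n)) (σ : Perm (Fin n))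
    (x : Fin n) : HC :=
  if x ∈ s then ((cycFac M σ x).re : HC) else cycFac M σ x

noncomputable def qdetRe (M : Matrix (Fin n) (Fin n) HC) (s : Finset (Fin n)) : HC :=
  ∑ σ : Perm (Fin n), ((sign σ : ℤ) : HC) * cycleProd σ (cycFacRe M s σ)

theorem qdetRe_empty (M : Matrix (Fin n) (Fin n) HC) : qdetRe M ∅ = Qdet M := by
  have (σ : Perm (Fin n)) : cycFacRe M ∅ σ = cycFac M σ :=
    funext fun _ ↦ if_neg (Finset.notMem_empty _)
  simp only [qdetRe, Qdet, permFac_eq_cycleProd, this]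

theorem cycFacRe_insert_of_ne (M : Matrix (Fin n) (Fin n) HC) (s : Finset (Fin n))
    (σ : Perm (Fin n)) {x y : Fin n} (hne : y ≠ x) :
    cycFacRe M (insert x s) σ y = cycFacRe M s σ y := by
  simp [cycFacRe, hne]

theorem cycFacRe_reverseCycle_of_not_sameCycle (M : Matrix (Fin n) (Fin n) HC)
    (s : Finset (Fin n)) {σ : Perm (Fin n)} {x y : Fin n} (h : ¬σ.SameCycle x y) :
    cycFacRe M s (σ.reverseCycle x) y = cycFacRe M s σ y := by
  simp only [cycFacRe, cycFac_reverseCycle_of_not_sameCycle M h]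

theorem cycleProd_cycFacRe_insert_add {M : Matrix (Fin n) (Fin n) HC} (hM : IsSelfAdjointQ M)
    {s : Finset (Fin n)} {x : Fin n} (hx : x ∉ s) (σ : Perm (Fin n)) :
    cycleProd σ (cycFacRe M (insert x s) σ) +
        cycleProd (σ.reverseCycle x) (cycFacRe M (insert x s) (σ.reverseCycle x)) =
      cycleProd σ (cycFacRe M s σ) +
        cycleProd (σ.reverseCycle x) (cycFacRe M s (σ.reverseCycle x)) := by
  simp only [cycleProd_reverseCycle]
  by_cases hσ : x ∈ cycleMaxima σ
  · obtain ⟨P, Q, hPQ⟩ := exists_cycleProd_eq_mul_mul hσ (cycFacRe M s σ)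
    have hrev (y) (hy : y ∈ cycleMaxima σ) (hne : y ≠ x) :
        cycFacRe M s (σ.reverseCycle x) y = cycFacRe M s σ y :=
      cycFacRe_reverseCycle_of_not_sameCycle M s (not_sameCycle_of_mem_cycleMaxima hσ hy hne)
    rw [hPQ _ fun y _ hne ↦ cycFacRe_insert_of_ne M s σ hne,
      hPQ _ fun y hy hne ↦ (cycFacRe_insert_of_ne M s _ hne).trans (hrev y hy hne),
      hPQ _ fun _ _ _ ↦ rfl, hPQ _ hrev]
    simp only [cycFacRe, Finset.mem_insert_self, if_true, hx, if_false,
      cycFac_reverseCycle_self hM, QuaternionAlgebra.re_star, zero_mul, add_zero]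
    rw [← add_mul (P * _) _ Q, ← add_mul (P * _) _ Q, ← mul_add P, ← mul_add P,
      QuaternionAlgebra.self_add_star_eq_re_add_re]
  · have agree (τ : Perm (Fin n)) :
        cycleProd σ (cycFacRe M (insert x s) τ) = cycleProd σ (cycFacRe M s τ) :=
      cycleProd_congr fun y hy ↦ cycFacRe_insert_of_ne M s τ (by rintro rfl; exact hσ hy)
    rw [agree, agree]

theorem qdetRe_insert {M : Matrix (Fin n) (Fin n) HC} (hM : IsSelfAdjointQ M)
    {s : Finset (Fin n)} {x : Fin n} (hx : x ∉ s) : qdetRe M (insert x s) = qdetRe M s :=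
  (reverseCycle_involutive x).sum_eq_sum_of_add_eq fun σ ↦ by
    rw [sign_reverseCycle, ← mul_add, ← mul_add, cycleProd_cycFacRe_insert_add hM hx]

theorem qdetRe_eq_Qdet {M : Matrix (Fin n) (Fin n) HC} (hM : IsSelfAdjointQ M)
    (s : Finset (Fin n)) : qdetRe M s = Qdet M := by
  induction s using Finset.induction_on with
  | empty => exact qdetRe_empty M
  | insert x s hx ih => rw [qdetRe_insert hM hx, ih]

theorem qdetRe_univ_eq_algebraMap (M : Matrix (Fin n) (Fin n) HC) :
    qdetRe M Finset.univ = algebraMap ℂ HC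
      (∑ σ : Perm (Fin n), (sign σ : ℂ) * cycleProd σ fun x ↦ (cycFac M σ x).re) := by
  have (σ : Perm (Fin n)) : cycFacRe M Finset.univ σ = fun x ↦ ((cycFac M σ x).re : HC) :=
    funext fun _ ↦ if_pos (Finset.mem_univ _)
  simp only [qdetRe, this, map_sum, map_mul, map_intCast,
    cycleProd, map_list_prod, List.map_map, Function.comp_def, QuaternionAlgebra.coe_algebraMap]

end

/-- for every self-adjoint `n × n` matrix `M` over `ℍ_ℂ`, the Moore-Dyson
quaternion determinant is a scalar: `Qdet M = conj (Qdet M)`, i.e. `Qdet M` lies in the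
subfield `ℂ` of `ℍ_ℂ`. -/
theorem statement4 (n : ℕ) (M : Matrix (Fin n) (Fin n) HC) (hM : IsSelfAdjointQ M) :
    star (Qdet M) = Qdet M ∧ ∃ c : ℂ, Qdet M = algebraMap ℂ HC c := by
  rw [← qdetRe_eq_Qdet hM Finset.univ, qdetRe_univ_eq_algebraMap,
    QuaternionAlgebra.coe_algebraMap, QuaternionAlgebra.star_coe]
  exact ⟨rfl, _, rfl⟩
end

section
/- Let M be a self-adjoint n×n matrix over ℍ_ℂ, let q ∈ ℍ_ℂ, and let D = diag(1, …, 1, q, 1, …, 1) be the diagonal matrix with q in position i and 1 elsewhere. Then D† M D (the matrix obtained from M by right-multiplying column i by q and left-multiplying row i by q̄, where (D†)_{kl} = conj(D_{lk})) is self-adjoint and Qdet(D† M D) = (q·q̄) · Qdet M. -/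
open Quaternion Matrix

/-!
Write `N = D† M D`, so `N k l = d̄ₖ M k l d_l` with `d = (1, …, q, …, 1)`. Along a cycle of `σ`
the inner factors `d_y d̄_y` are central scalars, so the cycle factor of `N` is `q q̄` times that
of `M` when the cycle passes through `i` without starting there, equals it when the cycle avoids
`i`, and is `q̄ C q` when the cycle starts at `i`. In the last case reversing the cycle through
`i` (a sign-preserving involution of `S_n` that keeps the other cycles and their order) turns `C`
into `C̄` for self-adjoint `M`, and `q̄ (C + C̄) q = q q̄ (C + C̄)` since `C + C̄` is a scalar.
Hence `M_σ + M_σ'` scales by `q q̄` for every `σ` and its reversal `σ'`; summing over `σ` gives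
`2 Qdet N = 2 q q̄ Qdet M`.
-/

theorem list_prod_range_mul_mul_telescope {S R : Type*} [CommSemiring S] [Semiring R]
    [Algebra S R] (a b A : ℕ → R) (ν : ℕ → S) (h : ∀ t, b t * a t = algebraMap S R (ν t))
    (s : ℕ) :
    ((List.range (s + 1)).map fun t => a t * A t * b (t + 1)).prod
      = (∏ t ∈ Finset.range s, ν (t + 1)) •
        (a 0 * ((List.range (s + 1)).map A).prod * b (s + 1)) := by
  induction s with
  | zero => simp
  | succ s ih =>
    rw [List.range_succ, List.map_append, List.prod_append, ih, Finset.prod_range_succ,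
      List.map_append, List.prod_append]
    simp only [List.map_cons, List.map_nil, List.prod_cons, List.prod_nil, mul_one]
    rw [smul_mul_assoc, mul_smul]
    congr 1
    simp only [mul_assoc]
    rw [← mul_assoc (b (s + 1)), h, Algebra.smul_def, Algebra.left_comm, Algebra.left_comm]

theorem Function.Involutive.sum_eq_sum_of_add_eq_add {ι M : Type*} [Fintype ι] [AddCommMonoid M]
    [IsAddTorsionFree M] {e : ι → ι} (he : Function.Involutive e) {f g : ι → M}
    (h : ∀ x, f x + f (e x) = g x + g (e x)) : ∑ x, f x = ∑ x, g x := by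
  have two_nsmul_sum (φ : ι → M) : 2 • ∑ x, φ x = ∑ x, (φ x + φ (e x)) := by
    rw [Finset.sum_add_distrib, he.bijective.sum_comp, two_nsmul]
  rw [← nsmul_right_inj two_ne_zero, two_nsmul_sum, two_nsmul_sum]
  exact Finset.sum_congr rfl fun x _ => h x

namespace Equiv.Perm

variable {α : Type*} [Fintype α] [DecidableEq α] (σ : Perm α)

theorem commute_cycleOf_self (i : α) : Commute (σ.cycleOf i) σ := by
  by_cases hi : σ i = i
  · rw [(cycleOf_eq_one_iff σ).2 hi]
    exact Commute.one_left σ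
  · exact self_mem_cycle_factors_commute (cycleOf_mem_cycleFactorsFinset_iff.2 (mem_support.2 hi))

theorem zpow_apply_eq_zpow_apply_iff_modEq (x : α) {a b : ℤ} :
    (σ ^ a) x = (σ ^ b) x ↔ a ≡ b [ZMOD orderOf (σ.cycleOf x)] := by
  by_cases hx : σ x = x
  · simp [(cycleOf_eq_one_iff σ).2 hx, zpow_apply_eq_self_of_apply_eq_self hx, Int.modEq_one]
  · rw [(isCycle_cycleOf σ hx).orderOf]
    exact (isCycleOn_support_cycleOf σ x).zpow_apply_eq_zpow_apply
      (mem_support_cycleOf_iff.2 ⟨SameCycle.refl _ _, mem_support.2 hx⟩)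

theorem zpow_apply_eq_self_iff_dvd (x : α) {k : ℤ} :
    (σ ^ k) x = x ↔ (orderOf (σ.cycleOf x) : ℤ) ∣ k := by
  rw [← Int.modEq_zero_iff_dvd, ← zpow_apply_eq_zpow_apply_iff_modEq, zpow_zero, one_apply]

theorem pow_apply_eq_pow_apply_iff_of_lt (x : α) {a b : ℕ} (ha : a < orderOf (σ.cycleOf x))
    (hb : b < orderOf (σ.cycleOf x)) : (σ ^ a) x = (σ ^ b) x ↔ a = b := by
  refine ⟨fun h => Nat.ModEq.eq_of_lt_of_lt ?_ ha hb, fun h => h ▸ rfl⟩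
  rwa [← zpow_natCast, ← zpow_natCast, zpow_apply_eq_zpow_apply_iff_modEq,
    Int.natCast_modEq_iff] at h

theorem zpow_neg_apply_eq_pow_sub (x : α) {t : ℕ} (ht : t ≤ orderOf (σ.cycleOf x)) :
    (σ ^ (-(t : ℤ))) x = (σ ^ (orderOf (σ.cycleOf x) - t)) x := by
  rw [← zpow_natCast, zpow_apply_eq_zpow_apply_iff_modEq, Int.modEq_iff_dvd, Nat.cast_sub ht]
  simp

theorem SameCycle.exists_pow_eq_of_lt {x y : α} (h : σ.SameCycle x y) :
    ∃ k < orderOf (σ.cycleOf x), (σ ^ k) x = y := by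
  obtain ⟨k, -, hk⟩ := h.exists_pow_eq'
  exact ⟨k % orderOf (σ.cycleOf x), Nat.mod_lt _ (orderOf_pos _),
    by rw [pow_mod_orderOf_cycleOf_apply, hk]⟩

theorem prod_range_ite_pow_succ_apply_eq {M : Type*} [CommMonoid M] (x i : α) (c : M) {s : ℕ}
    (hs : orderOf (σ.cycleOf x) = s + 1) :
    ∏ t ∈ Finset.range s, (if (σ ^ (t + 1)) x = i then c else 1)
      = if σ.SameCycle x i ∧ x ≠ i then c else 1 := by
  by_cases h : σ.SameCycle x i ∧ x ≠ i
  · obtain ⟨k, hk, rfl⟩ := h.1.exists_pow_eq_of_lt σ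
    obtain ⟨t₀, rfl⟩ : ∃ t₀, k = t₀ + 1 :=
      Nat.exists_eq_add_one_of_ne_zero (by rintro rfl; exact h.2 rfl)
    have ht₀ : t₀ < s := by omega
    rw [if_pos h]
    calc ∏ t ∈ Finset.range s, (if (σ ^ (t + 1)) x = (σ ^ (t₀ + 1)) x then c else 1)
        = ∏ t ∈ Finset.range s, (if t = t₀ then c else 1) :=
          Finset.prod_congr rfl fun t ht => by
            simp only [pow_apply_eq_pow_apply_iff_of_lt σ x (a := t + 1)
              (by rw [Finset.mem_range] at ht; omega) hk, add_left_inj]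
      _ = c := by simp [ht₀]
  · rw [if_neg h]
    refine Finset.prod_eq_one fun t ht => if_neg ?_
    rintro rfl
    refine h ⟨sameCycle_pow_right.2 (SameCycle.refl σ x), fun hx => ?_⟩
    have := (pow_apply_eq_pow_apply_iff_of_lt σ x (a := t + 1) (b := 0)
      (by rw [Finset.mem_range] at ht; omega) (orderOf_pos _)).1 (by simpa using hx.symm)
    omega

variable (i : α)

/-- On the cycle of `i` the permutation `σ` acts as `c = σ.cycleOf i`, so `c⁻¹ ^ 2 * σ` acts
there as `c⁻¹`; elsewhere `c` is the identity. -/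
def reverseCycleOf : Perm α := (σ.cycleOf i)⁻¹ ^ 2 * σ

theorem reverseCycleOf_zpow_apply (t : ℤ) (x : α) :
    ((σ.reverseCycleOf i) ^ t) x = if σ.SameCycle i x then (σ ^ (-t)) x else (σ ^ t) x := by
  have hcomm : Commute ((σ.cycleOf i)⁻¹ ^ 2) σ := ((commute_cycleOf_self σ i).inv_left).pow_left 2
  have hpow : (σ.reverseCycleOf i) ^ t = (σ.cycleOf i) ^ (-(2 * t)) * σ ^ t := by
    rw [reverseCycleOf, hcomm.mul_zpow, ← zpow_natCast, ← _root_.zpow_mul, _root_.inv_zpow']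
    simp
  rw [hpow, mul_apply]
  split_ifs with h
  · have h' : σ.SameCycle i ((σ ^ t) x) := sameCycle_zpow_right.2 h
    rw [h'.cycleOf_eq, cycleOf_zpow_apply_self, ← mul_apply, ← _root_.zpow_add]
    congr 2
    ring
  · exact zpow_apply_eq_self_of_apply_eq_self
      (cycleOf_apply_of_not_sameCycle (by rwa [sameCycle_zpow_right])) _

theorem sameCycle_reverseCycleOf_iff {x y : α} :
    (σ.reverseCycleOf i).SameCycle x y ↔ σ.SameCycle x y := by
  constructor
  · rintro ⟨t, rfl⟩
    rw [reverseCycleOf_zpow_apply]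
    split_ifs
    exacts [⟨-t, rfl⟩, ⟨t, rfl⟩]
  · rintro ⟨t, rfl⟩
    by_cases h : σ.SameCycle i x
    · exact ⟨-t, by rw [reverseCycleOf_zpow_apply, if_pos h, neg_neg]⟩
    · exact ⟨t, by rw [reverseCycleOf_zpow_apply, if_neg h]⟩

theorem orderOf_cycleOf_reverseCycleOf (x : α) :
    orderOf ((σ.reverseCycleOf i).cycleOf x) = orderOf (σ.cycleOf x) := by
  have key : ∀ k : ℤ, (orderOf ((σ.reverseCycleOf i).cycleOf x) : ℤ) ∣ k ↔
      (orderOf (σ.cycleOf x) : ℤ) ∣ k := fun k => by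
    rw [← zpow_apply_eq_self_iff_dvd, ← zpow_apply_eq_self_iff_dvd, reverseCycleOf_zpow_apply]
    split_ifs
    · rw [zpow_apply_eq_self_iff_dvd, zpow_apply_eq_self_iff_dvd, dvd_neg]
    · rfl
  exact Nat.dvd_antisymm (Int.natCast_dvd_natCast.1 ((key _).2 dvd_rfl))
    (Int.natCast_dvd_natCast.1 ((key _).1 dvd_rfl))

theorem reverseCycleOf_involutive : Function.Involutive (reverseCycleOf · i : Perm α → Perm α) := by
  intro σ
  ext x
  change ((σ.reverseCycleOf i).reverseCycleOf i ^ (1 : ℤ)) x = σ x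
  rw [reverseCycleOf_zpow_apply]
  simp only [sameCycle_reverseCycleOf_iff]
  split_ifs with hx
  · rw [reverseCycleOf_zpow_apply, if_pos hx, neg_neg, zpow_one]
  · rw [zpow_one, ← zpow_one (σ.reverseCycleOf i), reverseCycleOf_zpow_apply, if_neg hx, zpow_one]

theorem sign_reverseCycleOf : sign (σ.reverseCycleOf i) = sign σ := by
  simp [reverseCycleOf, Int.units_sq]

end Equiv.Perm

open Equiv Equiv.Perm

variable {n : ℕ}

def conjDiag (d : Fin n → HC) (M : Matrix (Fin n) (Fin n) HC) : Matrix (Fin n) (Fin n) HC :=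
  fun k l => star (d k) * M k l * d l

theorem cycFac_conjDiag (d : Fin n → HC) (M : Matrix (Fin n) (Fin n) HC) (σ : Perm (Fin n))
    (x : Fin n) {s : ℕ} (hs : orderOf (σ.cycleOf x) = s + 1) :
    cycFac (conjDiag d M) σ x
      = (∏ t ∈ Finset.range s, (d ((σ ^ (t + 1)) x) * star (d ((σ ^ (t + 1)) x))).re) •
        (star (d x) * cycFac M σ x * d x) := by
  have hper : (σ ^ (s + 1)) x = x := by
    rw [← hs, ← cycleOf_pow_apply_self, pow_orderOf_eq_one, one_apply]
  have := list_prod_range_mul_mul_telescope (fun t => star (d ((σ ^ t) x))) (fun t => d ((σ ^ t) x))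
    (fun t => M ((σ ^ t) x) ((σ ^ (t + 1)) x)) (fun t => (d ((σ ^ t) x) * star (d ((σ ^ t) x))).re)
    (fun t => by rw [QuaternionAlgebra.coe_algebraMap, ← QuaternionAlgebra.mul_star_eq_coe]) s
  simp only [pow_zero, Perm.one_apply, hper] at this
  rw [cycFac, cycFac, hs]
  exact this

theorem diagonal_star_mul_mul_diagonal (d : Fin n → HC) (M : Matrix (Fin n) (Fin n) HC) :
    diagonal (star d) * M * diagonal d = conjDiag d M := by
  funext k l
  rw [mul_diagonal, diagonal_mul]
  rfl

theorem isSelfAdjointQ_conjDiag {M : Matrix (Fin n) (Fin n) HC} (hM : IsSelfAdjointQ M)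
    (d : Fin n → HC) : IsSelfAdjointQ (conjDiag d M) := fun k l => by
  simp only [conjDiag, star_mul, star_star, ← hM k l, mul_assoc]

section MulSingle

variable (M : Matrix (Fin n) (Fin n) HC) (q : HC) (σ : Perm (Fin n)) {i x : Fin n}

theorem cycFac_conjDiag_mulSingle :
    cycFac (conjDiag (Pi.mulSingle i q) M) σ x
      = (if σ.SameCycle x i ∧ x ≠ i then (q * star q).re else 1) •
        (if x = i then star q * cycFac M σ x * q else cycFac M σ x) := by
  obtain ⟨s, hs⟩ := Nat.exists_eq_add_one_of_ne_zero (orderOf_pos (σ.cycleOf x)).ne'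
  rw [cycFac_conjDiag _ _ _ _ hs, ← prod_range_ite_pow_succ_apply_eq σ x i _ hs]
  congr 1
  · refine Finset.prod_congr rfl fun t _ => ?_
    rw [Pi.mulSingle_apply]
    split_ifs <;> simp
  · rw [Pi.mulSingle_apply]
    split_ifs <;> simp

theorem cycFac_conjDiag_mulSingle_of_not_sameCycle (h : ¬ σ.SameCycle i x) :
    cycFac (conjDiag (Pi.mulSingle i q) M) σ x = cycFac M σ x := by
  have hx : x ≠ i := by rintro rfl; exact h (SameCycle.refl σ x)
  have h' : ¬ σ.SameCycle x i := fun h' => h h'.symm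
  simp [cycFac_conjDiag_mulSingle, hx, h']

theorem cycFac_conjDiag_mulSingle_of_sameCycle_of_ne (h : σ.SameCycle i x) (hx : x ≠ i) :
    cycFac (conjDiag (Pi.mulSingle i q) M) σ x = (q * star q).re • cycFac M σ x := by
  simp [cycFac_conjDiag_mulSingle, hx, h.symm]

theorem cycFac_conjDiag_mulSingle_self :
    cycFac (conjDiag (Pi.mulSingle i q) M) σ i = star q * cycFac M σ i * q := by
  simp [cycFac_conjDiag_mulSingle]

end MulSingle

section Reverse

variable {M : Matrix (Fin n) (Fin n) HC} {σ : Perm (Fin n)} {i x : Fin n}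

theorem cycFac_reverseCycleOf_of_not_sameCycle (h : ¬ σ.SameCycle i x) :
    cycFac M (σ.reverseCycleOf i) x = cycFac M σ x := by
  simp only [cycFac, orderOf_cycleOf_reverseCycleOf, ← zpow_natCast, reverseCycleOf_zpow_apply,
    if_neg h]

theorem cycFac_reverseCycleOf_of_sameCycle (hM : IsSelfAdjointQ M) (h : σ.SameCycle i x) :
    cycFac M (σ.reverseCycleOf i) x = star (cycFac M σ x) := by
  have hrev (t : ℕ) (ht : t ≤ orderOf (σ.cycleOf x)) :
      ((σ.reverseCycleOf i) ^ t) x = (σ ^ (orderOf (σ.cycleOf x) - t)) x := by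
    rw [← zpow_natCast, reverseCycleOf_zpow_apply, if_pos h, zpow_neg_apply_eq_pow_sub σ x ht]
  have star_list_prod (l : List HC) : star l.prod = (l.map star).reverse.prod :=
    unop_map_list_prod (starMulEquiv : HC ≃* HCᵐᵒᵖ) l
  have reverse_range (s : ℕ) : (List.range s).reverse = (List.range s).map (s - 1 - ·) := by
    rw [List.range_eq_range', List.reverse_range', Nat.zero_add, List.range_eq_range']
  rw [cycFac, cycFac, orderOf_cycleOf_reverseCycleOf, star_list_prod, ← List.map_reverse,
    ← List.map_reverse, reverse_range, List.map_map, List.map_map]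
  refine congrArg List.prod (List.map_congr_left fun t ht => ?_)
  rw [List.mem_range] at ht
  simp only [Function.comp_apply]
  rw [← hM, hrev t ht.le, hrev (t + 1) ht, show orderOf (σ.cycleOf x) - 1 - t + 1 =
    orderOf (σ.cycleOf x) - t by omega, Nat.sub_sub, Nat.add_comm 1]

end Reverse

open scoped Classical in
noncomputable def cycleLeaders (σ : Perm (Fin n)) : List (Fin n) :=
  ((Finset.univ.filter fun x : Fin n => ∀ y : Fin n, σ.SameCycle x y → y ≤ x).sort (· ≤ ·)).reverse

theorem permFac_eq_prod_cycleLeaders (M : Matrix (Fin n) (Fin n) HC) (σ : Perm (Fin n)) :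
    permFac M σ = ((cycleLeaders σ).map (cycFac M σ)).prod :=
  rfl

theorem mem_cycleLeaders {σ : Perm (Fin n)} {x : Fin n} :
    x ∈ cycleLeaders σ ↔ ∀ y, σ.SameCycle x y → y ≤ x := by
  simp [cycleLeaders]

theorem cycleLeaders_reverseCycleOf (σ : Perm (Fin n)) (i : Fin n) :
    cycleLeaders (σ.reverseCycleOf i) = cycleLeaders σ := by
  simp only [cycleLeaders, sameCycle_reverseCycleOf_iff]

theorem exists_cycleLeaders_eq_append_cons (σ : Perm (Fin n)) (i : Fin n) :
    ∃ L₁ m L₂, cycleLeaders σ = L₁ ++ m :: L₂ ∧ σ.SameCycle i m ∧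
      ∀ x ∈ L₁ ++ L₂, ¬ σ.SameCycle i x := by
  classical
  obtain ⟨m, hm, hmax⟩ :=
    Finset.exists_max_image (Finset.univ.filter (σ.SameCycle i)) id ⟨i, by simp [SameCycle.refl]⟩
  rw [Finset.mem_filter] at hm
  have hlead : m ∈ cycleLeaders σ :=
    mem_cycleLeaders.2 fun y hy => hmax y (by simp [hm.2.trans hy])
  obtain ⟨L₁, L₂, hL⟩ := List.append_of_mem hlead
  have hnd : (m :: (L₁ ++ L₂)).Nodup :=
    List.nodup_middle.1 (hL ▸ List.nodup_reverse.2 (Finset.sort_nodup _ _))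
  refine ⟨L₁, m, L₂, hL, hm.2, fun x hx hix => (List.nodup_cons.1 hnd).1 ?_⟩
  have hxlead : x ∈ cycleLeaders σ := by
    rw [hL]
    rcases List.mem_append.1 hx with h | h <;> simp [h]
  have : x = m := le_antisymm (mem_cycleLeaders.1 hlead x (hm.2.symm.trans hix))
    (mem_cycleLeaders.1 hxlead m (hix.symm.trans hm.2))
  exact this ▸ hx

theorem permFac_eq_mul_cycFac_mul {K M : Matrix (Fin n) (Fin n) HC} {τ σ : Perm (Fin n)}
    {L₁ L₂ : List (Fin n)} {m : Fin n} (hL : cycleLeaders τ = L₁ ++ m :: L₂)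
    (hout : ∀ x ∈ L₁ ++ L₂, cycFac K τ x = cycFac M σ x) :
    permFac K τ = (L₁.map (cycFac M σ)).prod * cycFac K τ m * (L₂.map (cycFac M σ)).prod := by
  rw [permFac_eq_prod_cycleLeaders, hL, List.map_append, List.map_cons, List.prod_append,
    List.prod_cons, List.map_congr_left fun x hx => hout x (List.mem_append_left _ hx),
    List.map_congr_left fun x hx => hout x (List.mem_append_right _ hx), mul_assoc]

section Pairing

variable {M : Matrix (Fin n) (Fin n) HC}

theorem cycFac_conjDiag_mulSingle_add_reverseCycleOf (hM : IsSelfAdjointQ M) (q : HC)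
    {σ : Perm (Fin n)} {i m : Fin n} (h : σ.SameCycle i m) :
    cycFac (conjDiag (Pi.mulSingle i q) M) σ m
        + cycFac (conjDiag (Pi.mulSingle i q) M) (σ.reverseCycleOf i) m
      = (q * star q).re • (cycFac M σ m + cycFac M (σ.reverseCycleOf i) m) := by
  by_cases hm : m = i
  · subst hm
    rw [cycFac_conjDiag_mulSingle_self, cycFac_conjDiag_mulSingle_self,
      cycFac_reverseCycleOf_of_sameCycle hM h, ← add_mul, ← mul_add]
    obtain ⟨z, hz⟩ : ∃ z : ℂ, cycFac M σ m + star (cycFac M σ m) = z :=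
      ⟨_, QuaternionAlgebra.self_add_star' _⟩
    rw [hz, ← QuaternionAlgebra.coe_mul_eq_smul, ← QuaternionAlgebra.mul_star_eq_coe,
      ← QuaternionAlgebra.coe_commutes, mul_assoc, QuaternionAlgebra.coe_commutes,
      star_comm_self']
  · have hRev : (σ.reverseCycleOf i).SameCycle i m := (sameCycle_reverseCycleOf_iff σ i).2 h
    rw [cycFac_conjDiag_mulSingle_of_sameCycle_of_ne _ _ _ h hm,
      cycFac_conjDiag_mulSingle_of_sameCycle_of_ne _ _ _ hRev hm, smul_add]

theorem permFac_conjDiag_mulSingle_add_reverseCycleOf (hM : IsSelfAdjointQ M) (q : HC)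
    (σ : Perm (Fin n)) (i : Fin n) :
    permFac (conjDiag (Pi.mulSingle i q) M) σ
        + permFac (conjDiag (Pi.mulSingle i q) M) (σ.reverseCycleOf i)
      = (q * star q).re • (permFac M σ + permFac M (σ.reverseCycleOf i)) := by
  obtain ⟨L₁, m, L₂, hL, hm, hout⟩ := exists_cycleLeaders_eq_append_cons σ i
  have hL' : cycleLeaders (σ.reverseCycleOf i) = L₁ ++ m :: L₂ :=
    (cycleLeaders_reverseCycleOf σ i).trans hL
  have hout' (x : Fin n) (hx : x ∈ L₁ ++ L₂) : ¬ (σ.reverseCycleOf i).SameCycle i x :=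
    fun h => hout x hx ((sameCycle_reverseCycleOf_iff σ i).1 h)
  rw [permFac_eq_mul_cycFac_mul hL fun x hx =>
      cycFac_conjDiag_mulSingle_of_not_sameCycle M q σ (hout x hx),
    permFac_eq_mul_cycFac_mul hL' fun x hx =>
      (cycFac_conjDiag_mulSingle_of_not_sameCycle M q _ (hout' x hx)).trans
        (cycFac_reverseCycleOf_of_not_sameCycle (hout x hx)),
    permFac_eq_mul_cycFac_mul (K := M) hL fun _ _ => rfl,
    permFac_eq_mul_cycFac_mul hL' fun x hx => cycFac_reverseCycleOf_of_not_sameCycle (hout x hx),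
    ← add_mul, ← mul_add, cycFac_conjDiag_mulSingle_add_reverseCycleOf hM q hm, ← add_mul,
    ← mul_add, mul_smul_comm, smul_mul_assoc]

end Pairing

/-- for a self-adjoint `n × n` matrix `M` over `ℍ_ℂ`, `q ∈ ℍ_ℂ`, and the diagonal
matrix `D = diag(1, …, 1, q, 1, …, 1)` with `q` in position `i`, the matrix `D† M D` is
self-adjoint and `Qdet (D† M D) = (q q̄) Qdet M`. -/
theorem statement7 (n : ℕ) (M : Matrix (Fin n) (Fin n) HC) (hM : IsSelfAdjointQ M)
    (q : HC) (i : Fin n) :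
    let D : Matrix (Fin n) (Fin n) HC := Matrix.diagonal (fun k => if k = i then q else 1)
    let Ddag : Matrix (Fin n) (Fin n) HC := fun k l => star (D l k)
    IsSelfAdjointQ (Ddag * M * D) ∧ Qdet (Ddag * M * D) = q * star q * Qdet M := by
  intro D Ddag
  have hD : D = diagonal (Pi.mulSingle i q) :=
    congrArg diagonal (funext fun k => (Pi.mulSingle_apply i q k).symm)
  have hDdag : Ddag = diagonal (star (Pi.mulSingle i q)) := by
    rw [← diagonal_conjTranspose, ← hD]
    rfl
  have : IsAddTorsionFree HC := IsAddTorsionFree.of_module_rat HC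
  rw [hDdag, hD, diagonal_star_mul_mul_diagonal, QuaternionAlgebra.mul_star_eq_coe,
    QuaternionAlgebra.coe_mul_eq_smul, Qdet, Qdet, Finset.smul_sum]
  refine ⟨isSelfAdjointQ_conjDiag hM _, (reverseCycleOf_involutive i).sum_eq_sum_of_add_eq_add
    fun σ => ?_⟩
  rw [sign_reverseCycleOf, ← mul_add, permFac_conjDiag_mulSingle_add_reverseCycleOf hM,
    mul_smul_comm, mul_add, smul_add]
end

section
/- Let T be a self-adjoint n×n matrix over ℍ_ℂ and let a₁, …, a_n be complex numbers (viewed as scalars in ℍ_ℂ). Then the matrix [a_i T_{ij} a_j]_{i,j=1}^n is self-adjoint and Qdet[a_i T_{ij} a_j]_{i,j=1}^n = (Π_{i=1}^n a_i²) · Qdet T. -/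
/-!
Multiplying row `i` and column `j` by the central scalars `a i`, `a j` multiplies the factor of a
cycle `(x, σ x, …)` by `∏ₜ a (σᵗ x) a (σᵗ⁺¹ x)`, which is `∏ₜ a (σᵗ x) ^ 2` because the cycle
closes up. Every index lies on exactly one cycle, the one through the largest element of its
orbit, so every term `M_σ` is multiplied by `∏ᵢ a i ^ 2`. Self-adjointness is preserved because
quaternion conjugation fixes complex scalars.
-/

open Quaternion Matrix

theorem Finset.prod_range_shift_of_apply_eq {M : Type*} [CommMonoid M] {g : ℕ → M} {k : ℕ}
    (hk : g k = g 0) : ∏ t ∈ Finset.range k, g (t + 1) = ∏ t ∈ Finset.range k, g t := by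
  cases k with
  | zero => simp
  | succ m => rw [Finset.prod_range_succ, hk, Finset.prod_range_succ']

theorem List.prod_map_smul_eq_smul_prod {ι R A : Type*} [CommMonoid R] [Monoid A]
    [MulAction R A] [IsScalarTower R A A] [SMulCommClass R A A] (g : ι → R) (h : ι → A)
    (L : List ι) : (L.map fun t => g t • h t).prod = (L.map g).prod • (L.map h).prod := by
  induction L with
  | nil => simp
  | cons x xs ih => simp [ih, smul_mul_smul_comm]

theorem List.prod_map_reverse_sort {ι M : Type*} [CommMonoid M] [LinearOrder ι] (s : Finset ι)
    (f : ι → M) : ((s.sort (· ≤ ·)).reverse.map f).prod = ∏ x ∈ s, f x := by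
  rw [List.map_reverse, List.prod_reverse, ((s.sort_perm_toList _).map f).prod_eq,
    Finset.prod_map_toList]

theorem algebraMap_mul_mul_algebraMap {R A : Type*} [CommSemiring R] [Semiring A] [Algebra R A]
    (r s : R) (x : A) : algebraMap R A r * x * algebraMap R A s = (r * s) • x := by
  rw [mul_assoc, ← Algebra.commutes s x, ← mul_assoc, ← map_mul, ← Algebra.smul_def]

namespace Equiv.Perm

variable {α : Type*} [Fintype α] [DecidableEq α] (σ : Perm α)

theorem pow_orderOf_cycleOf_apply (x : α) : (σ ^ orderOf (σ.cycleOf x)) x = x := by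
  rw [← cycleOf_pow_apply_self, pow_orderOf_eq_one, one_apply]

theorem cycleOf_pow_eq_one_iff (x : α) (m : ℕ) : σ.cycleOf x ^ m = 1 ↔ (σ ^ m) x = x := by
  refine ⟨fun h => by rw [← cycleOf_pow_apply_self, h, one_apply], fun h => ?_⟩
  ext y
  by_cases hxy : σ.SameCycle x y
  · rw [hxy.cycleOf_eq, cycleOf_pow_apply_self, one_apply]
    obtain ⟨i, rfl⟩ := hxy
    rw [← mul_apply, ((Commute.refl σ).pow_left m).zpow_right i |>.eq, mul_apply, h]
  · rw [one_apply]
    exact pow_apply_eq_self_of_apply_eq_self (cycleOf_apply_of_not_sameCycle hxy) m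

theorem injOn_pow_apply_range_orderOf_cycleOf (x : α) :
    Set.InjOn (fun t => (σ ^ t) x) (Finset.range (orderOf (σ.cycleOf x))) := by
  intro t ht u hu h
  simp only [Finset.coe_range, Set.mem_Iio] at ht hu
  wlog htu : t ≤ u generalizing t u
  · exact (this h.symm hu ht (by omega)).symm
  obtain ⟨d, rfl⟩ := Nat.exists_eq_add_of_le htu
  have hd : (σ ^ d) x = x := by simpa [pow_add, mul_apply] using h.symm
  have hdvd : orderOf (σ.cycleOf x) ∣ d :=
    orderOf_dvd_of_pow_eq_one ((σ.cycleOf_pow_eq_one_iff x d).2 hd)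
  rw [Nat.eq_zero_of_dvd_of_lt hdvd (by omega), add_zero]

theorem image_pow_apply_range_orderOf_cycleOf (x : α) :
    (Finset.range (orderOf (σ.cycleOf x))).image (fun t => (σ ^ t) x) =
      Finset.univ.filter (σ.SameCycle x) := by
  ext y
  simp only [Finset.mem_image, Finset.mem_range, Finset.mem_filter, Finset.mem_univ, true_and]
  refine ⟨fun ⟨t, _, hy⟩ => hy ▸ ⟨t, by simp⟩, fun hxy => ?_⟩
  obtain ⟨i, _, rfl⟩ := hxy.exists_pow_eq'
  exact ⟨i % orderOf (σ.cycleOf x), Nat.mod_lt _ (orderOf_pos _),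
    σ.pow_mod_orderOf_cycleOf_apply i x⟩

theorem prod_range_orderOf_cycleOf {M : Type*} [CommMonoid M] (f : α → M) (x : α) :
    ∏ t ∈ Finset.range (orderOf (σ.cycleOf x)), f ((σ ^ t) x) =
      ∏ y ∈ Finset.univ.filter (σ.SameCycle x), f y := by
  rw [← image_pow_apply_range_orderOf_cycleOf,
    Finset.prod_image (σ.injOn_pow_apply_range_orderOf_cycleOf x)]

theorem prod_prod_range_orderOf_cycleOf {M : Type*} [CommMonoid M] (f : α → M) (s : Finset α)
    (hs : ∀ y, ∃! x, x ∈ s ∧ σ.SameCycle x y) :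
    ∏ x ∈ s, ∏ t ∈ Finset.range (orderOf (σ.cycleOf x)), f ((σ ^ t) x) = ∏ y, f y := by
  simp_rw [prod_range_orderOf_cycleOf]
  rw [← Finset.prod_biUnion]
  · congr 1
    refine Finset.eq_univ_of_forall fun y => ?_
    obtain ⟨x, ⟨hx, hxy⟩, -⟩ := hs y
    exact Finset.mem_biUnion.2 ⟨x, hx, by simpa using hxy⟩
  · intro x hx x' hx' hne
    refine Finset.disjoint_left.2 fun y hy hy' => hne ?_
    simp only [Finset.mem_filter, Finset.mem_univ, true_and] at hy hy'
    exact (hs y).unique ⟨hx, hy⟩ ⟨hx', hy'⟩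

end Equiv.Perm

theorem Equiv.Perm.existsUnique_max_sameCycle {α : Type*} [Fintype α] [LinearOrder α]
    (σ : Equiv.Perm α) (y : α) :
    ∃! x, (∀ z, σ.SameCycle x z → z ≤ x) ∧ σ.SameCycle x y := by
  obtain ⟨m, hm, hmax⟩ := (Finset.univ.filter (σ.SameCycle y)).exists_max_image id
    ⟨y, Finset.mem_filter.2 ⟨Finset.mem_univ y, .refl σ y⟩⟩
  simp only [Finset.mem_filter, Finset.mem_univ, true_and, id] at hm hmax
  exact ⟨m, ⟨fun z hz => hmax z (hm.trans hz), hm.symm⟩,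
    fun x ⟨hx, hxy⟩ => le_antisymm (hmax x hxy.symm) (hx m (hxy.trans hm))⟩

theorem QuaternionAlgebra.star_algebraMap {R : Type*} [CommRing R] {c₁ c₂ c₃ : R} (r : R) :
    star (algebraMap R ℍ[R,c₁,c₂,c₃] r) = algebraMap R ℍ[R,c₁,c₂,c₃] r := by
  rw [QuaternionAlgebra.coe_algebraMap, QuaternionAlgebra.star_coe]

theorem IsSelfAdjointQ.scale {n : ℕ} {T : Matrix (Fin n) (Fin n) HC} (hT : IsSelfAdjointQ T)
    (a : Fin n → ℂ) :
    IsSelfAdjointQ (fun i j => algebraMap ℂ HC (a i) * T i j * algebraMap ℂ HC (a j)) := by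
  intro i j
  simp only [star_mul, QuaternionAlgebra.star_algebraMap, ← hT i j, mul_assoc]

section Scale

variable {n : ℕ} (M : Matrix (Fin n) (Fin n) HC) (a : Fin n → ℂ) (σ : Equiv.Perm (Fin n))

theorem cycFac_scale :
    cycFac (fun i j => algebraMap ℂ HC (a i) * M i j * algebraMap ℂ HC (a j)) σ =
      fun x => (∏ t ∈ Finset.range (orderOf (σ.cycleOf x)), a ((σ ^ t) x) ^ 2) • cycFac M σ x := by
  funext x
  simp only [cycFac, algebraMap_mul_mul_algebraMap, List.prod_map_smul_eq_smul_prod]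
  congr 1
  change ∏ t ∈ Finset.range _, _ = _
  rw [Finset.prod_mul_distrib, Finset.prod_range_shift_of_apply_eq (g := fun t => a ((σ ^ t) x))
    (by simp only [Equiv.Perm.pow_orderOf_cycleOf_apply, pow_zero, Equiv.Perm.one_apply]),
    ← Finset.prod_mul_distrib]
  simp only [pow_two]

theorem permFac_scale :
    permFac (fun i j => algebraMap ℂ HC (a i) * M i j * algebraMap ℂ HC (a j)) σ =
      (∏ i, a i ^ 2) • permFac M σ := by
  simp only [permFac, cycFac_scale, List.prod_map_smul_eq_smul_prod, List.prod_map_reverse_sort]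
  rw [σ.prod_prod_range_orderOf_cycleOf (fun y => a y ^ 2)]
  intro y
  simpa only [Finset.mem_filter, Finset.mem_univ, true_and] using σ.existsUnique_max_sameCycle y

end Scale

/-- for a self-adjoint `n × n` matrix `T` over `ℍ_ℂ` and complex numbers
`a₁, …, a_n` (viewed as scalars in `ℍ_ℂ`), the matrix `[a_i T_{ij} a_j]` is self-adjoint and
`Qdet [a_i T_{ij} a_j] = (Π_i a_i²) Qdet T`. -/
theorem statement17 (n : ℕ) (T : Matrix (Fin n) (Fin n) HC) (hT : IsSelfAdjointQ T)
    (a : Fin n → ℂ) :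
    IsSelfAdjointQ (fun i j => algebraMap ℂ HC (a i) * T i j * algebraMap ℂ HC (a j)) ∧
    Qdet (fun i j => algebraMap ℂ HC (a i) * T i j * algebraMap ℂ HC (a j)) =
      algebraMap ℂ HC (∏ i, (a i) ^ 2) * Qdet T := by
  refine ⟨hT.scale a, ?_⟩
  rw [Qdet, Finset.mul_sum]
  refine Finset.sum_congr rfl fun σ _ => ?_
  rw [permFac_scale, mul_smul_comm, Algebra.smul_def]
end

section
/- Let K be a self-adjoint n×n matrix over ℍ_ℂ, let g₁, …, g_n be nonnegative real numbers, and let G = diag(g₁, …, g_n) and √G = diag(√g₁, …, √g_n), regarded as diagonal matrices over ℍ_ℂ with complex-scalar entries. If the matrix I + (G − I)K is invertible, then the matrix K^g := √G · K · (I + (G − I)K)⁻¹ · √G is self-adjoint; in particular one has the identity K(I + (G − I)K)⁻¹ = (I + K(G − I))⁻¹K. -/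
open Quaternion Matrix

/-! `K (1 + D K)⁻¹` is self-adjoint for self-adjoint `K` and `D` because taking adjoints turns it
into `(1 + K D)⁻¹ K`, which equals `K (1 + D K)⁻¹` by the push-through identity
`(1 + K D) K = K (1 + D K)`. Conjugating by the self-adjoint diagonal matrix `√G` preserves
self-adjointness, and `G - 1` is self-adjoint since its entries are central scalars. -/

theorem Ring.mul_inverse_eq_inverse_mul_of_mul_eq {M₀ : Type*} [MonoidWithZero M₀] {a b k : M₀}
    (ha : IsUnit a) (hb : IsUnit b) (h : b * k = k * a) :
    k * Ring.inverse a = Ring.inverse b * k := by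
  rw [eq_comm, Ring.inverse_mul_eq_iff_eq_mul _ _ _ hb, ← mul_assoc, h,
    Ring.mul_inverse_cancel_right _ _ ha]

theorem one_add_mul_mul_eq_mul_one_add_mul {R : Type*} [Ring R] (k d : R) :
    (1 + k * d) * k = k * (1 + d * k) := by
  rw [add_mul, one_mul, mul_add, mul_one, mul_assoc]

section StarRing

variable {R : Type*} [Ring R] [StarRing R] {k d : R}

theorem star_one_add_mul_of_isSelfAdjoint (hk : IsSelfAdjoint k) (hd : IsSelfAdjoint d) :
    star (1 + d * k) = 1 + k * d := by
  rw [star_add, star_one, star_mul, hk.star_eq, hd.star_eq]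

theorem IsSelfAdjoint.mul_inverse_one_add_mul_eq (hk : IsSelfAdjoint k) (hd : IsSelfAdjoint d)
    (h : IsUnit (1 + d * k)) :
    k * Ring.inverse (1 + d * k) = Ring.inverse (1 + k * d) * k := by
  have h' : IsUnit (1 + k * d) := star_one_add_mul_of_isSelfAdjoint hk hd ▸ h.star
  exact Ring.mul_inverse_eq_inverse_mul_of_mul_eq h h' (one_add_mul_mul_eq_mul_one_add_mul k d)

theorem IsSelfAdjoint.mul_inverse_one_add_mul (hk : IsSelfAdjoint k) (hd : IsSelfAdjoint d)
    (h : IsUnit (1 + d * k)) :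
    IsSelfAdjoint (k * Ring.inverse (1 + d * k)) := by
  rw [isSelfAdjoint_iff, star_mul, ← Ring.inverse_star, star_one_add_mul_of_isSelfAdjoint hk hd,
    hk.star_eq, hk.mul_inverse_one_add_mul_eq hd h]

end StarRing

theorem isSelfAdjointQ_iff {n : ℕ} {M : Matrix (Fin n) (Fin n) HC} :
    IsSelfAdjointQ M ↔ IsSelfAdjoint M := by
  rw [isSelfAdjoint_iff, ← Matrix.ext_iff]
  exact forall_congr' fun i => forall_congr' fun j => by rw [Matrix.star_apply, eq_comm]

theorem isSelfAdjoint_diagonal_algebraMap {ι R : Type*} [DecidableEq ι] [CommRing R]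
    {c₁ c₂ c₃ : R} (f : ι → R) :
    IsSelfAdjoint (diagonal fun i => algebraMap R ℍ[R,c₁,c₂,c₃] (f i)) :=
  isHermitian_diagonal_iff.mpr fun i => QuaternionAlgebra.star_coe (f i)

theorem statement18_general (n : ℕ) (K : Matrix (Fin n) (Fin n) HC) (hK : IsSelfAdjointQ K)
    (g : Fin n → ℝ) :
    let G : Matrix (Fin n) (Fin n) HC := Matrix.diagonal (fun i => algebraMap ℂ HC (g i : ℂ))
    let sG : Matrix (Fin n) (Fin n) HC :=
      Matrix.diagonal (fun i => algebraMap ℂ HC (Real.sqrt (g i) : ℂ))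
    IsUnit (1 + (G - 1) * K) →
      IsSelfAdjointQ (sG * (K * Ring.inverse (1 + (G - 1) * K)) * sG) ∧
      K * Ring.inverse (1 + (G - 1) * K) = Ring.inverse (1 + K * (G - 1)) * K := by
  intro G sG hA
  have hK' : IsSelfAdjoint K := isSelfAdjointQ_iff.mp hK
  have hG : IsSelfAdjoint (G - 1) := (isSelfAdjoint_diagonal_algebraMap _).sub (.one _)
  have hsG : IsSelfAdjoint sG := isSelfAdjoint_diagonal_algebraMap _
  exact ⟨isSelfAdjointQ_iff.mpr ((hK'.mul_inverse_one_add_mul hG hA).conjugate_self hsG),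
    hK'.mul_inverse_one_add_mul_eq hG hA⟩

/-- let `K` be a self-adjoint `n × n` matrix over `ℍ_ℂ`, `g₁, …, g_n ≥ 0` real,
`G = diag(g₁, …, g_n)` and `√G = diag(√g₁, …, √g_n)` (diagonal matrices over `ℍ_ℂ` with
complex-scalar entries). If `I + (G − I)K` is invertible then
`K^g := √G ⬝ K (I + (G − I)K)⁻¹ √G` is self-adjoint; in particular
`K (I + (G − I)K)⁻¹ = (I + K(G − I))⁻¹ K`. -/
theorem statement18 (n : ℕ) (K : Matrix (Fin n) (Fin n) HC) (hK : IsSelfAdjointQ K)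
    (g : Fin n → ℝ) (hg : ∀ i, 0 ≤ g i) :
    let G : Matrix (Fin n) (Fin n) HC := Matrix.diagonal (fun i => algebraMap ℂ HC (g i : ℂ))
    let sG : Matrix (Fin n) (Fin n) HC :=
      Matrix.diagonal (fun i => algebraMap ℂ HC (Real.sqrt (g i) : ℂ))
    IsUnit (1 + (G - 1) * K) →
      IsSelfAdjointQ (sG * (K * Ring.inverse (1 + (G - 1) * K)) * sG) ∧
      K * Ring.inverse (1 + (G - 1) * K) = Ring.inverse (1 + K * (G - 1)) * K :=
  statement18_general n K hK g
end
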